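/- For every l ∈ L and v ∈ F, exactly one of the following holds: (type α) {⟨l,v⟩, ⟨l,ι(v)⟩} = {0,2}, or (type β) ⟨l,v⟩ = ⟨l,ι(v)⟩ = 1. Moreover, the pair (l,v) is of type α if and only if there exists a ∈ L with l + a = v or l + a = ι(v). Finally, G acts transitively on the set of pairs (l̄,[v]) ∈ L̄ × F̄ of type α, and transitively on the set of pairs of type β (the type depends only on the classes l̄ ∈ L̄ and [v] ∈ F̄). -/

import Mathlib

/-!
The form is hyperbolic: `h^⊥` is negative definite, and Cauchy–Schwarz there confines the
intersection number of `l ∈ L` and `v ∈ F` to `{0, 1, 2}`, while `ι` turns `⟨l, v⟩` into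
`2 - ⟨l, v⟩`; this gives the α/β dichotomy and its invariance under `ι`.

Pairing with the exceptional classes `E i ∈ L` and the conic classes `E 0 - E i ∈ F` confines the
coordinates `i ≠ 0` of a class to three consecutive integers, so that its degree `v 0` together
with `⟨v, v⟩` and `⟨v, h⟩` determines it up to a permutation of coordinates. A permutation
followed by the reflection in a root `E 0 - E i - E j - E k` lowers the degree of every class of
non-minimal degree. Descending moves every `l ∈ L` to `E 1` and then, with `E 1` fixed, every
`v ∈ F` to a class of minimal degree, unique up to permutations fixing `E 1` once `⟨E 1, v⟩` is
given.
-/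

/-- The lattice ℤ⁸. -/
abbrev V : Type := Fin 8 → ℤ

/-- The bilinear form with Gram matrix diag(1,−1,…,−1). -/
def B (v w : V) : ℤ := v 0 * w 0 - ∑ i : Fin 7, v i.succ * w i.succ

/-- The class h = (3,−1,…,−1) with ⟨h,h⟩ = 2. -/
def hh : V := ![3, -1, -1, -1, -1, -1, -1, -1]

/-- The involution ι(v) = ⟨v,h⟩·h − v. -/
def iota (v : V) : V := B v hh • hh - v

/-- L = {v : ⟨v,v⟩ = −1, ⟨v,h⟩ = 1}. -/
def L : Set V := {v | B v v = -1 ∧ B v hh = 1}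

/-- F = {v : ⟨v,v⟩ = 0, ⟨v,h⟩ = 2}. -/
def F : Set V := {v | B v v = 0 ∧ B v hh = 2}

/-- L̄ = L/⟨ι⟩, realized as the set of ι-orbits. -/
def Lbar : Set (Set V) := {p | ∃ v ∈ L, p = {v, iota v}}

/-- F̄ = F/⟨ι⟩, realized as the set of ι-orbits. -/
def Fbar : Set (Set V) := {p | ∃ v ∈ F, p = {v, iota v}}

/-- G = {g ∈ GL₈(ℤ) : g preserves B and g(h) = h}. -/
def G : Subgroup (V ≃ₗ[ℤ] V) where
  carrier := {g | (∀ v w : V, B (g v) (g w) = B v w) ∧ g hh = hh}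
  one_mem' := ⟨fun _ _ => rfl, rfl⟩
  mul_mem' := by
    rintro a b ⟨ha1, ha2⟩ ⟨hb1, hb2⟩
    refine ⟨fun v w => ?_, ?_⟩
    · show B (a (b v)) (a (b w)) = B v w
      rw [ha1, hb1]
    · show a (b hh) = hh
      rw [hb2, ha2]
  inv_mem' := by
    rintro a ⟨ha1, ha2⟩
    refine ⟨fun v w => ?_, ?_⟩
    · show B (a.symm v) (a.symm w) = B v w
      conv_rhs => rw [← a.apply_symm_apply v, ← a.apply_symm_apply w]
      rw [ha1]
    · show a.symm hh = hh
      conv_lhs => rw [← ha2]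
      exact a.symm_apply_apply hh

/-- Type α for a pair (l,v) ∈ L × F: intersection numbers {0,2}. -/
def TypeAlpha (l v : V) : Prop :=
  (B l v = 0 ∧ B l (iota v) = 2) ∨ (B l v = 2 ∧ B l (iota v) = 0)

/-- Type β for a pair (l,v) ∈ L × F: both intersection numbers equal 1. -/
def TypeBeta (l v : V) : Prop := B l v = 1 ∧ B l (iota v) = 1

open Finset

lemma B_eq_sum (v w : V) : B v w = 2 * v 0 * w 0 - ∑ i, v i * w i := by
  rw [B, Fin.sum_univ_succ (fun i => v i * w i)]; ring

lemma B_comm (v w : V) : B v w = B w v := by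
  simp only [B_eq_sum, mul_comm (v _)]; ring

lemma B_add_left (u v w : V) : B (u + v) w = B u w + B v w := by
  simp only [B_eq_sum, Pi.add_apply, add_mul, sum_add_distrib]; ring

lemma B_add_right (u v w : V) : B u (v + w) = B u v + B u w := by
  rw [B_comm, B_add_left, B_comm v, B_comm w]

lemma B_smul_left (c : ℤ) (v w : V) : B (c • v) w = c * B v w := by
  simp only [B_eq_sum, Pi.smul_apply, smul_eq_mul, mul_assoc, ← mul_sum]; ring

lemma B_smul_right (c : ℤ) (v w : V) : B v (c • w) = c * B v w := by
  rw [B_comm, B_smul_left, B_comm]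

lemma B_sub_left (u v w : V) : B (u - v) w = B u w - B v w := by
  simp only [B_eq_sum, Pi.sub_apply, sub_mul, sum_sub_distrib]; ring

lemma B_sub_right (u v w : V) : B u (v - w) = B u v - B u w := by
  rw [B_comm, B_sub_left, B_comm v, B_comm w]

lemma hh_apply (i : Fin 8) : hh i = if i = 0 then 3 else -1 := by
  fin_cases i <;> rfl

lemma B_hh_hh : B hh hh = 2 := by decide

lemma B_hh_eq_sum (v : V) : B v hh = 3 * v 0 + ∑ i : Fin 7, v i.succ := by
  simp only [B, hh_apply, Fin.succ_ne_zero, if_true, if_false, mul_neg_one, sum_neg_distrib]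
  ring

lemma B_self_eq_sum (v : V) : B v v = v 0 ^ 2 - ∑ i : Fin 7, v i.succ ^ 2 := by
  simp only [B, sq]

lemma sum_eq_B_hh_sub (v : V) : ∑ i, v i = B v hh - 2 * v 0 := by
  rw [B_hh_eq_sum, Fin.sum_univ_succ]; ring

lemma sum_sq_eq_sub_B_self (v : V) : ∑ i, v i ^ 2 = 2 * v 0 ^ 2 - B v v := by
  rw [B_self_eq_sum, Fin.sum_univ_succ]; ring

/-- The Hodge index inequality: as `⟨h, h⟩ = 2`, it says that `h^⊥` is negative definite. -/
lemma two_mul_B_self_le_sq (x : V) : 2 * B x x ≤ B x hh ^ 2 := by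
  have cs : (∑ i : Fin 7, x i.succ) ^ 2 ≤ 7 * ∑ i : Fin 7, x i.succ ^ 2 := by
    simpa using sq_sum_le_card_mul_sum_sq (s := (univ : Finset (Fin 7))) (f := fun i => x i.succ)
  rw [B_hh_eq_sum, B_self_eq_sum]
  nlinarith [sq_nonneg (7 * x 0 + 3 * ∑ i : Fin 7, x i.succ)]

lemma B_mem_Icc_of_mem_L_of_mem_F {l v : V} (hl : l ∈ L) (hv : v ∈ F) :
    0 ≤ B l v ∧ B l v ≤ 2 := by
  obtain ⟨hll, hlh⟩ := hl
  obtain ⟨hvv, hvh⟩ := hv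
  set t := B l v
  -- the Hodge index inequality for this combination reads `(t - 1) ^ 2 ≤ 3`
  have h := two_mul_B_self_le_sq ((4 : ℤ) • l + (2 * t - 2) • v)
  simp only [B_add_left, B_add_right, B_smul_left, B_smul_right, B_comm v l, hll, hlh, hvv,
    hvh] at h
  constructor <;> nlinarith

lemma mem_L_iff {l : V} : l ∈ L ↔ B l l = -1 ∧ B l hh = 1 := Iff.rfl

lemma mem_F_iff {v : V} : v ∈ F ↔ B v v = 0 ∧ B v hh = 2 := Iff.rfl

lemma B_iota_right (x y : V) : B x (iota y) = B y hh * B x hh - B x y := by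
  rw [iota, B_sub_right, B_smul_right]

lemma B_iota_left (x y : V) : B (iota x) y = B x hh * B y hh - B x y := by
  rw [B_comm, B_iota_right, B_comm y x]

lemma B_iota_hh (x : V) : B (iota x) hh = B x hh := by
  rw [B_iota_left, B_hh_hh]; ring

lemma B_iota_iota (x y : V) : B (iota x) (iota y) = B x y := by
  rw [B_iota_left, B_iota_hh, B_iota_right]; ring

lemma iota_iota (x : V) : iota (iota x) = x := by
  rw [iota, B_iota_hh, iota, sub_sub_cancel]

lemma iota_mem_L {l : V} (hl : l ∈ L) : iota l ∈ L := by
  rwa [mem_L_iff, B_iota_iota, B_iota_hh]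

lemma iota_mem_F {v : V} (hv : v ∈ F) : iota v ∈ F := by
  rwa [mem_F_iff, B_iota_iota, B_iota_hh]

lemma B_iota_right_of_mem {l v : V} (hl : l ∈ L) (hv : v ∈ F) : B l (iota v) = 2 - B l v := by
  rw [B_iota_right, hl.2, hv.2]; ring

lemma B_iota_left_of_mem {l v : V} (hl : l ∈ L) (hv : v ∈ F) : B (iota l) v = 2 - B l v := by
  rw [B_iota_left, hl.2, hv.2]; ring

lemma xor_typeAlpha_typeBeta {l v : V} (hl : l ∈ L) (hv : v ∈ F) :
    Xor (TypeAlpha l v) (TypeBeta l v) := by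
  have := B_mem_Icc_of_mem_L_of_mem_F hl hv
  rw [xor_def, TypeAlpha, TypeBeta, B_iota_right_of_mem hl hv]
  omega

lemma typeAlpha_iff {l v : V} (hl : l ∈ L) (hv : v ∈ F) :
    TypeAlpha l v ↔ B l v = 0 ∨ B l (iota v) = 0 := by
  rw [TypeAlpha, B_iota_right_of_mem hl hv]
  omega

lemma sub_mem_L_iff {l w : V} (hl : l ∈ L) (hw : w ∈ F) : w - l ∈ L ↔ B l w = 0 := by
  simp only [mem_L_iff, B_sub_left, B_sub_right, B_comm w l, hl.1, hl.2, hw.1, hw.2]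
  omega

lemma typeAlpha_iff_exists_add_eq {l v : V} (hl : l ∈ L) (hv : v ∈ F) :
    TypeAlpha l v ↔ ∃ a ∈ L, l + a = v ∨ l + a = iota v := by
  rw [typeAlpha_iff hl hv, ← sub_mem_L_iff hl hv, ← sub_mem_L_iff hl (iota_mem_F hv)]
  constructor
  · rintro (h | h)
    exacts [⟨_, h, Or.inl (add_sub_cancel l v)⟩, ⟨_, h, Or.inr (add_sub_cancel l _)⟩]
  · rintro ⟨a, ha, h | h⟩ <;> rw [← h, add_sub_cancel_left]
    exacts [Or.inl ha, Or.inr ha]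

lemma typeAlpha_iota_iff {l v : V} (hl : l ∈ L) (hv : v ∈ F) :
    (TypeAlpha l v ↔ TypeAlpha (iota l) v) ∧ (TypeAlpha l v ↔ TypeAlpha l (iota v)) := by
  rw [TypeAlpha, TypeAlpha, TypeAlpha, B_iota_left_of_mem hl hv,
    B_iota_right_of_mem (iota_mem_L hl) hv, B_iota_left_of_mem hl hv, B_iota_right_of_mem hl hv,
    iota_iota]
  omega

section Counting

variable {ι : Type*} [Fintype ι]

lemma sum_comp_eq_of_sum_eq_of_sum_sq_eq {t w : ι → ℤ} {x : ℤ}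
    (ht : ∀ i, x ≤ t i ∧ t i ≤ x + 2) (hw : ∀ i, x ≤ w i ∧ w i ≤ x + 2)
    (h₁ : ∑ i, t i = ∑ i, w i) (h₂ : ∑ i, t i ^ 2 = ∑ i, w i ^ 2) (f : ℤ → ℤ) :
    ∑ i, f (t i) = ∑ i, f (w i) := by
  -- Lagrange interpolation of `2 * f` at `x`, `x + 1`, `x + 2`
  obtain ⟨a, b, c, hf⟩ : ∃ a b c : ℤ, ∀ u, x ≤ u ∧ u ≤ x + 2 →
      2 * f u = a * u ^ 2 + b * u + c := by
    refine ⟨f x - 2 * f (x + 1) + f (x + 2), 4 * f (x + 1) - 3 * f x - f (x + 2)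
      - 2 * (f x - 2 * f (x + 1) + f (x + 2)) * x,
      (f x - 2 * f (x + 1) + f (x + 2)) * x ^ 2
      - (4 * f (x + 1) - 3 * f x - f (x + 2)) * x + 2 * f x, fun u hu => ?_⟩
    obtain rfl | rfl | rfl : u = x ∨ u = x + 1 ∨ u = x + 2 := by omega
    all_goals ring
  have hsum : ∀ s : ι → ℤ, (∀ i, x ≤ s i ∧ s i ≤ x + 2) →
      2 * ∑ i, f (s i) = a * ∑ i, s i ^ 2 + b * ∑ i, s i + Fintype.card ι * c := by
    intro s hs
    simp [mul_sum, hf _ (hs _), sum_add_distrib]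
  have := hsum t ht
  have := hsum w hw
  rw [h₁, h₂] at *
  omega

lemma exists_perm_comp_eq_of_card_fiber_eq {α : Type*} [DecidableEq α] {t w : ι → α}
    (h : ∀ c, Fintype.card {i // t i = c} = Fintype.card {i // w i = c}) :
    ∃ σ : Equiv.Perm ι, t ∘ σ = w := by
  refine ⟨(Equiv.sigmaFiberEquiv w).symm.trans ((Equiv.sigmaCongrRight fun c =>
    Fintype.equivOfCardEq (h c).symm).trans (Equiv.sigmaFiberEquiv t)), funext fun i => ?_⟩
  exact (Fintype.equivOfCardEq (h (w i)).symm ⟨i, rfl⟩).2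

lemma exists_perm_comp_eq_of_sum_eq_of_sum_sq_eq {t w : ι → ℤ} {x : ℤ}
    (ht : ∀ i, x ≤ t i ∧ t i ≤ x + 2) (hw : ∀ i, x ≤ w i ∧ w i ≤ x + 2)
    (h₁ : ∑ i, t i = ∑ i, w i) (h₂ : ∑ i, t i ^ 2 = ∑ i, w i ^ 2) :
    ∃ σ : Equiv.Perm ι, t ∘ σ = w := by
  classical
  refine exists_perm_comp_eq_of_card_fiber_eq fun c => ?_
  have := sum_comp_eq_of_sum_eq_of_sum_sq_eq ht hw h₁ h₂ fun u => if u = c then 1 else 0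
  rw [Fintype.card_subtype, Fintype.card_subtype]
  simpa using this

lemma exists_perm_fixing_comp_eq [DecidableEq ι] {S : Finset ι} {t w : ι → ℤ} {x : ℤ}
    (hS : ∀ i ∈ S, t i = w i)
    (ht : ∀ i ∉ S, x ≤ t i ∧ t i ≤ x + 2) (hw : ∀ i ∉ S, x ≤ w i ∧ w i ≤ x + 2)
    (h₁ : ∑ i, t i = ∑ i, w i) (h₂ : ∑ i, t i ^ 2 = ∑ i, w i ^ 2) :
    ∃ π : Equiv.Perm ι, (∀ i ∈ S, π i = i) ∧ t ∘ π = w := by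
  have hcompl : ∀ f : ℤ → ℤ, ∑ i, f (t i) = ∑ i, f (w i) →
      ∑ i : ↥Sᶜ, f (t i) = ∑ i : ↥Sᶜ, f (w i) := by
    intro f hf
    have hSf : ∑ i ∈ S, f (t i) = ∑ i ∈ S, f (w i) := sum_congr rfl fun i hi => by rw [hS i hi]
    have := sum_compl_add_sum S (f ∘ t)
    have := sum_compl_add_sum S (f ∘ w)
    simp only [Function.comp_apply] at *
    rw [sum_coe_sort Sᶜ (fun i => f (t i)), sum_coe_sort Sᶜ (fun i => f (w i))]
    omega
  obtain ⟨σ, hσ⟩ := exists_perm_comp_eq_of_sum_eq_of_sum_sq_eq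
    (t := fun i : ↥Sᶜ => t i) (w := fun i => w i)
    (fun i => ht i (mem_compl.1 i.2)) (fun i => hw i (mem_compl.1 i.2))
    (hcompl id h₁) (hcompl (· ^ 2) h₂)
  have hfix : ∀ i ∈ S, Equiv.Perm.ofSubtype σ i = i := fun i hi =>
    Equiv.Perm.ofSubtype_apply_of_not_mem σ (by simpa using hi)
  refine ⟨Equiv.Perm.ofSubtype σ, hfix, funext fun i => ?_⟩
  by_cases hi : i ∈ S
  · simp [hfix i hi, hS i hi]
  · have hi' : i ∈ Sᶜ := mem_compl.2 hi
    simpa [Equiv.Perm.ofSubtype_apply_coe σ ⟨i, hi'⟩] using congrFun hσ ⟨i, hi'⟩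

end Counting

theorem exists_smul_le_of_descent {M α : Type*} [Monoid M] [MulAction M α] (H : Submonoid M)
    {P : α → Prop} (deg : α → ℕ) (n : ℕ)
    (step : ∀ a, P a → n < deg a → ∃ g ∈ H, P (g • a) ∧ deg (g • a) < deg a) :
    ∀ a, P a → ∃ g ∈ H, P (g • a) ∧ deg (g • a) ≤ n := by
  intro a ha
  induction hd : deg a using Nat.strong_induction_on generalizing a with
  | _ d ih =>
    by_cases hn : d ≤ n
    · exact ⟨1, one_mem H, by rwa [one_smul], by rwa [one_smul, hd]⟩
    obtain ⟨g, hg, hPg, hlt⟩ := step a ha (by omega)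
    obtain ⟨g', hg', hPg', hle⟩ := ih _ (hd ▸ hlt) _ hPg rfl
    exact ⟨g' * g, mul_mem hg' hg, by rwa [mul_smul], by rwa [mul_smul]⟩

lemma map_iota_of_mem_G {g : V ≃ₗ[ℤ] V} (hg : g ∈ G) (x : V) : g (iota x) = iota (g x) := by
  have hxh : B (g x) hh = B x hh := by rw [← hg.1 x hh, hg.2]
  rw [iota, iota, map_sub, map_smul, hg.2, hxh]

lemma map_mem_L_of_mem_G {g : V ≃ₗ[ℤ] V} (hg : g ∈ G) {l : V} (hl : l ∈ L) : g l ∈ L := by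
  rwa [mem_L_iff, hg.1, ← hg.2, hg.1]

lemma map_mem_F_of_mem_G {g : V ≃ₗ[ℤ] V} (hg : g ∈ G) {v : V} (hv : v ∈ F) : g v ∈ F := by
  rwa [mem_F_iff, hg.1, ← hg.2, hg.1]

lemma image_pairs_eq_of_mem_G {g : V ≃ₗ[ℤ] V} (hg : g ∈ G) {l v l' v' : V} (hl : g l = l')
    (hv : g v = v') :
    (fun x => g x) '' ({l, iota l} : Set V) = {l', iota l'} ∧
      (fun x => g x) '' ({v, iota v} : Set V) = {v', iota v'} := by
  rw [Set.image_pair, Set.image_pair, map_iota_of_mem_G hg, map_iota_of_mem_G hg, hl, hv]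
  exact ⟨rfl, rfl⟩

abbrev permG (π : Equiv.Perm (Fin 8)) : V ≃ₗ[ℤ] V := LinearEquiv.funCongrLeft ℤ ℤ π

lemma permG_apply (π : Equiv.Perm (Fin 8)) (v : V) : permG π v = v ∘ π := rfl

lemma permG_mem_G {π : Equiv.Perm (Fin 8)} (hπ : π 0 = 0) : permG π ∈ G := by
  refine ⟨fun v w => ?_, funext fun i => ?_⟩
  · simp only [permG_apply, B_eq_sum, Function.comp_apply, hπ]
    rw [Equiv.sum_comp π (fun i => v i * w i)]
  · have hπi : π i = 0 ↔ i = 0 := by rw [← π.apply_eq_iff_eq (x := i), hπ]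
    simp only [permG_apply, Function.comp_apply, hh_apply, hπi]

lemma permG_single_of_apply_eq {π : Equiv.Perm (Fin 8)} {i : Fin 8} (hπ : π i = i) :
    permG π (Pi.single i 1) = Pi.single i 1 := by
  funext j
  have hπj : π j = i ↔ j = i := by rw [← π.apply_eq_iff_eq (x := j), hπ]
  simp only [permG_apply, Function.comp_apply, Pi.single_apply, hπj]

lemma exists_permG_eq {S : Finset (Fin 8)} (hS0 : 0 ∈ S) {v w : V} (hS : ∀ i ∈ S, v i = w i)
    (hvv : B v v = B w w) (hvh : B v hh = B w hh) {x : ℤ}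
    (hv : ∀ i ∉ S, x ≤ v i ∧ v i ≤ x + 2) (hw : ∀ i ∉ S, x ≤ w i ∧ w i ≤ x + 2) :
    ∃ π : Equiv.Perm (Fin 8), (∀ i ∈ S, π i = i) ∧ permG π v = w := by
  have h0 := hS 0 hS0
  refine exists_perm_fixing_comp_eq hS hv hw ?_ ?_
  · rw [sum_eq_B_hh_sub, sum_eq_B_hh_sub, hvh, h0]
  · rw [sum_sq_eq_sub_B_self, sum_sq_eq_sub_B_self, hvv, h0]

def Bform : LinearMap.BilinForm ℤ V :=
  LinearMap.mk₂ ℤ B B_add_left B_smul_left B_add_right B_smul_right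

def reflG (r : V) (hr : B r r = -2) : V ≃ₗ[ℤ] V :=
  Module.reflection (x := r) (f := -Bform.flip r) (by simp [Bform, hr])

lemma reflG_apply (r : V) (hr : B r r = -2) (y : V) : reflG r hr y = y + B y r • r := by
  simp [reflG, Module.reflection_apply, Bform, sub_eq_add_neg]

lemma reflG_mem_G {r : V} (hr : B r r = -2) (hrh : B r hh = 0) : reflG r hr ∈ G := by
  refine ⟨fun v w => ?_, ?_⟩
  · simp only [reflG_apply, B_add_left, B_add_right, B_smul_left, B_smul_right, hr, B_comm r w]
    ring
  · rw [reflG_apply, B_comm, hrh, zero_smul, add_zero]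

/-- `E 0` is the class of a line, `E i` for `i ≠ 0` that of the `i`-th exceptional curve. -/
abbrev E (i : Fin 8) : V := Pi.single i 1

lemma B_E_zero_left (v : V) : B (E 0) v = v 0 := by
  simp [B]

lemma B_E_left {i : Fin 8} (hi : i ≠ 0) (v : V) : B (E i) v = -v i := by
  simp [B_eq_sum, Pi.single_apply, hi.symm]

lemma E_mem_L {i : Fin 8} (hi : i ≠ 0) : E i ∈ L := by
  rw [mem_L_iff]; revert i; decide

lemma E_zero_sub_E_mem_F {i : Fin 8} (hi : i ≠ 0) : E 0 - E i ∈ F := by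
  rw [mem_F_iff]; revert i; decide

lemma coord_mem_Icc_of_mem_L {l : V} (hl : l ∈ L) {i : Fin 8} (hi : i ≠ 0) :
    -l 0 ≤ l i ∧ l i ≤ -l 0 + 2 := by
  have := B_mem_Icc_of_mem_L_of_mem_F hl (E_zero_sub_E_mem_F hi)
  rw [B_comm, B_sub_left, B_E_zero_left, B_E_left hi] at this
  omega

lemma coord_mem_Icc_of_mem_F {v : V} (hv : v ∈ F) {i : Fin 8} (hi : i ≠ 0) :
    -2 ≤ v i ∧ v i ≤ 0 := by
  have := B_mem_Icc_of_mem_L_of_mem_F (E_mem_L hi) hv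
  rw [B_E_left hi] at this
  omega

lemma B_hh_sub_mem_Icc_of_coord {v : V} {a b : ℤ} (h : ∀ i ≠ 0, a ≤ v i ∧ v i ≤ b) :
    7 * a ≤ B v hh - 3 * v 0 ∧ B v hh - 3 * v 0 ≤ 7 * b := by
  have hlo : ∑ _i : Fin 7, a ≤ ∑ i : Fin 7, v i.succ :=
    sum_le_sum fun i _ => (h i.succ i.succ_ne_zero).1
  have hhi : ∑ i : Fin 7, v i.succ ≤ ∑ _i : Fin 7, b :=
    sum_le_sum fun i _ => (h i.succ i.succ_ne_zero).2
  simp only [sum_const, card_univ, Fintype.card_fin, nsmul_eq_mul, Nat.cast_ofNat] at hlo hhi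
  rw [B_hh_eq_sum]
  omega

lemma degree_mem_Icc_of_mem_L {l : V} (hl : l ∈ L) : 0 ≤ l 0 ∧ l 0 ≤ 3 := by
  have := B_hh_sub_mem_Icc_of_coord fun i hi => coord_mem_Icc_of_mem_L hl hi
  rw [hl.2] at this
  omega

lemma degree_mem_Icc_of_mem_F {v : V} (hv : v ∈ F) : 1 ≤ v 0 ∧ v 0 ≤ 5 := by
  have := B_hh_sub_mem_Icc_of_coord fun i hi => coord_mem_Icc_of_mem_F hv hi
  rw [hv.2] at this
  omega

lemma exists_mem_L_degree_eq_B_root_neg {l : V} (hl : l ∈ L) (hpos : 0 < l 0) :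
    ∃ w ∈ L, w 0 = l 0 ∧ (∀ i ≠ 0, -l 0 ≤ w i ∧ w i ≤ -l 0 + 2) ∧
      B w (E 0 - E 1 - E 2 - E 3) < 0 := by
  obtain ⟨-, hle⟩ := degree_mem_Icc_of_mem_L hl
  interval_cases l 0
  · exact ⟨![1, -1, -1, 0, 0, 0, 0, 0], mem_L_iff.2 (by decide), by decide⟩
  · exact ⟨![2, -1, -1, -1, -1, -1, 0, 0], mem_L_iff.2 (by decide), by decide⟩
  · exact ⟨![3, -2, -1, -1, -1, -1, -1, -1], mem_L_iff.2 (by decide), by decide⟩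

lemma exists_mem_F_degree_eq_B_root_neg {v : V} (hv : v ∈ F) (hc : B (E 1) v ≤ 1)
    (hd : 1 < v 0) :
    ∃ w ∈ F, w 0 = v 0 ∧ w 1 = v 1 ∧ (∀ i ≠ 0, -2 ≤ w i ∧ w i ≤ 0) ∧
      B w (E 0 - E 2 - E 3 - E 4) < 0 := by
  rw [B_E_left one_ne_zero] at hc
  obtain ⟨-, hle⟩ := degree_mem_Icc_of_mem_F hv
  have := coord_mem_Icc_of_mem_F hv one_ne_zero
  obtain hv1 | hv1 : v 1 = 0 ∨ v 1 = -1 := by omega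
  · have hvL : v - E 1 ∈ L :=
      (sub_mem_L_iff (E_mem_L one_ne_zero) hv).2 (by rw [B_E_left one_ne_zero, hv1]; rfl)
    have hle' : v 0 ≤ 3 := by simpa using (degree_mem_Icc_of_mem_L hvL).2
    rw [hv1]
    interval_cases v 0
    · exact ⟨![2, 0, -1, -1, -1, -1, 0, 0], mem_F_iff.2 (by decide), by decide⟩
    · exact ⟨![3, 0, -2, -1, -1, -1, -1, -1], mem_F_iff.2 (by decide), by decide⟩
  · rw [hv1]
    interval_cases v 0
    · exact ⟨![2, -1, -1, -1, -1, 0, 0, 0], mem_F_iff.2 (by decide), by decide⟩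
    · exact ⟨![3, -1, -2, -1, -1, -1, -1, 0], mem_F_iff.2 (by decide), by decide⟩
    · exact ⟨![4, -1, -2, -2, -2, -1, -1, -1], mem_F_iff.2 (by decide), by decide⟩
    · exact ⟨![5, -1, -2, -2, -2, -2, -2, -2], mem_F_iff.2 (by decide), by decide⟩

lemma exists_mem_G_degree_lt_of_mem_L {l : V} (hl : l ∈ L) (hpos : 0 < l 0) :
    ∃ g ∈ G, g l ∈ L ∧ g l 0 < l 0 := by
  obtain ⟨w, hwL, hw0, hwI, hwr⟩ := exists_mem_L_degree_eq_B_root_neg hl hpos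
  obtain ⟨π, hπ, hπl⟩ := exists_permG_eq (mem_singleton_self 0) (by simpa using hw0.symm)
    (hl.1.trans hwL.1.symm) (hl.2.trans hwL.2.symm)
    (fun i hi => coord_mem_Icc_of_mem_L hl (by simpa using hi))
    (fun i hi => hwI i (by simpa using hi))
  have hr : B (E 0 - E 1 - E 2 - E 3) (E 0 - E 1 - E 2 - E 3) = -2 := by decide
  have hg : reflG _ hr * permG π ∈ G :=
    mul_mem (reflG_mem_G hr (by decide)) (permG_mem_G (hπ 0 (mem_singleton_self 0)))
  refine ⟨_, hg, map_mem_L_of_mem_G hg hl, ?_⟩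
  have hr0 : (E 0 - E 1 - E 2 - E 3) 0 = 1 := by decide
  rw [LinearEquiv.mul_apply, hπl, reflG_apply, Pi.add_apply, Pi.smul_apply, smul_eq_mul, hr0]
  omega

lemma exists_mem_G_fix_E_one_degree_lt_of_mem_F {v : V} (hv : v ∈ F) (hc : B (E 1) v ≤ 1)
    (hd : 1 < v 0) :
    ∃ g ∈ G, g (E 1) = E 1 ∧ g v ∈ F ∧ g v 0 < v 0 := by
  obtain ⟨w, hwF, hw0, hw1, hwI, hwr⟩ := exists_mem_F_degree_eq_B_root_neg hv hc hd
  have hS : ∀ i ∈ ({0, 1} : Finset (Fin 8)), v i = w i := by simp [hw0, hw1]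
  obtain ⟨π, hπ, hπv⟩ := exists_permG_eq (by simp) hS (hv.1.trans hwF.1.symm)
    (hv.2.trans hwF.2.symm)
    (fun i hi => coord_mem_Icc_of_mem_F hv (i := i) (by rintro rfl; exact hi (by simp)))
    (fun i hi => hwI i (by rintro rfl; exact hi (by simp)))
  have hr : B (E 0 - E 2 - E 3 - E 4) (E 0 - E 2 - E 3 - E 4) = -2 := by decide
  have hg : reflG _ hr * permG π ∈ G :=
    mul_mem (reflG_mem_G hr (by decide)) (permG_mem_G (hπ 0 (by simp)))
  refine ⟨_, hg, ?_, map_mem_F_of_mem_G hg hv, ?_⟩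
  · have hE : B (E 1) (E 0 - E 2 - E 3 - E 4) = 0 := by decide
    rw [LinearEquiv.mul_apply, permG_single_of_apply_eq (hπ 1 (by simp)), reflG_apply, hE,
      zero_smul, add_zero]
  · have hr0 : (E 0 - E 2 - E 3 - E 4) 0 = 1 := by decide
    rw [LinearEquiv.mul_apply, hπv, reflG_apply, Pi.add_apply, Pi.smul_apply, smul_eq_mul, hr0]
    omega

lemma exists_mem_G_degree_eq_zero_of_mem_L {l : V} (hl : l ∈ L) :
    ∃ g ∈ G, g l ∈ L ∧ g l 0 = 0 := by
  obtain ⟨g, hg, hgl, hle⟩ := exists_smul_le_of_descent G.toSubmonoid (P := (· ∈ L))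
    (fun u : V => (u 0).toNat) 0 (fun u hu hpos => by
      obtain ⟨g, hg, hgu, hlt⟩ := exists_mem_G_degree_lt_of_mem_L hu (by omega)
      exact ⟨g, hg, hgu, by rw [LinearEquiv.smul_def]; omega⟩) l hl
  rw [LinearEquiv.smul_def] at hgl hle
  exact ⟨g, hg, hgl, by have := degree_mem_Icc_of_mem_L hgl; omega⟩

lemma exists_mem_G_fix_E_one_degree_eq_one_of_mem_F {v : V} (hv : v ∈ F) (hc : B (E 1) v ≤ 1) :
    ∃ g ∈ G, g (E 1) = E 1 ∧ g v ∈ F ∧ B (E 1) (g v) = B (E 1) v ∧ g v 0 = 1 := by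
  obtain ⟨g, hgH, ⟨hgv, hgc⟩, hle⟩ := exists_smul_le_of_descent
    (G ⊓ MulAction.stabilizer (V ≃ₗ[ℤ] V) (E 1)).toSubmonoid
    (P := fun u => u ∈ F ∧ B (E 1) u = B (E 1) v) (fun u : V => (u 0).toNat) 1
    (fun u ⟨hu, huc⟩ hd => by
      obtain ⟨g, hg, hgE, hgu, hlt⟩ :=
        exists_mem_G_fix_E_one_degree_lt_of_mem_F hu (huc ▸ hc) (by omega)
      refine ⟨g, Subgroup.mem_inf.2 ⟨hg, MulAction.mem_stabilizer_iff.2 hgE⟩, ⟨hgu, ?_⟩, ?_⟩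
      · rw [LinearEquiv.smul_def, ← huc, ← hg.1 (E 1) u, hgE]
      · rw [LinearEquiv.smul_def]; omega) v ⟨hv, rfl⟩
  obtain ⟨hg, hgE⟩ := Subgroup.mem_inf.1 hgH
  rw [LinearEquiv.smul_def] at hgv hgc hle
  exact ⟨g, hg, MulAction.mem_stabilizer_iff.1 hgE, hgv, hgc,
    by have := degree_mem_Icc_of_mem_F hgv; omega⟩

lemma exists_mem_G_eq_of_mem_L {l l' : V} (hl : l ∈ L) (hl' : l' ∈ L) : ∃ g ∈ G, g l = l' := by
  obtain ⟨g, hg, hgl, hg0⟩ := exists_mem_G_degree_eq_zero_of_mem_L hl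
  obtain ⟨g', hg', hg'l, hg'0⟩ := exists_mem_G_degree_eq_zero_of_mem_L hl'
  obtain ⟨π, hπ, hπl⟩ := exists_permG_eq (mem_singleton_self 0) (by simp [hg0, hg'0])
    (hgl.1.trans hg'l.1.symm) (hgl.2.trans hg'l.2.symm) (x := 0)
    (fun i hi => by have := coord_mem_Icc_of_mem_L hgl (i := i) (by simpa using hi); omega)
    (fun i hi => by have := coord_mem_Icc_of_mem_L hg'l (i := i) (by simpa using hi); omega)
  refine ⟨g'⁻¹ * (permG π * g),
    mul_mem (inv_mem hg') (mul_mem (permG_mem_G (hπ 0 (mem_singleton_self 0))) hg), ?_⟩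
  show g'.symm (permG π (g l)) = l'
  rw [hπl, LinearEquiv.symm_apply_apply]

lemma exists_mem_G_fix_E_one_eq_of_mem_F {v w : V} (hv : v ∈ F) (hw : w ∈ F)
    (hc : B (E 1) v ≤ 1) (hvw : B (E 1) v = B (E 1) w) :
    ∃ g ∈ G, g (E 1) = E 1 ∧ g v = w := by
  obtain ⟨g, hg, hgE, hgv, hgc, hg0⟩ := exists_mem_G_fix_E_one_degree_eq_one_of_mem_F hv hc
  obtain ⟨g', hg', hg'E, hg'w, hg'c, hg'0⟩ :=
    exists_mem_G_fix_E_one_degree_eq_one_of_mem_F hw (hvw ▸ hc)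
  have hS : ∀ i ∈ ({0, 1} : Finset (Fin 8)), g v i = g' w i := by
    rw [B_E_left one_ne_zero] at hgc hg'c
    simp only [mem_insert, mem_singleton, forall_eq_or_imp, forall_eq]
    omega
  obtain ⟨π, hπ, hπv⟩ := exists_permG_eq (by simp) hS (hgv.1.trans hg'w.1.symm)
    (hgv.2.trans hg'w.2.symm)
    (fun i hi => coord_mem_Icc_of_mem_F hgv (i := i) (by rintro rfl; exact hi (by simp)))
    (fun i hi => coord_mem_Icc_of_mem_F hg'w (i := i) (by rintro rfl; exact hi (by simp)))
  refine ⟨g'⁻¹ * (permG π * g),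
    mul_mem (inv_mem hg') (mul_mem (permG_mem_G (hπ 0 (by simp))) hg), ?_, ?_⟩
  · show g'.symm (permG π (g (E 1))) = E 1
    rw [hgE, permG_single_of_apply_eq (hπ 1 (by simp)), LinearEquiv.symm_apply_eq, hg'E]
  · show g'.symm (permG π (g v)) = w
    rw [hπv, LinearEquiv.symm_apply_apply]

theorem exists_mem_G_eq_and_eq_of_B_eq {l v l' v' : V} (hl : l ∈ L) (hv : v ∈ F) (hl' : l' ∈ L)
    (hv' : v' ∈ F) (hc : B l v ≤ 1) (h : B l v = B l' v') : ∃ g ∈ G, g l = l' ∧ g v = v' := by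
  obtain ⟨g, hg, hgl⟩ := exists_mem_G_eq_of_mem_L hl (E_mem_L one_ne_zero)
  obtain ⟨g', hg', hg'l⟩ := exists_mem_G_eq_of_mem_L hl' (E_mem_L one_ne_zero)
  have hB : B (E 1) (g v) = B l v := by rw [← hgl, hg.1]
  have hB' : B (E 1) (g' v') = B l' v' := by rw [← hg'l, hg'.1]
  obtain ⟨k, hk, hkE, hkv⟩ := exists_mem_G_fix_E_one_eq_of_mem_F (map_mem_F_of_mem_G hg hv)
    (map_mem_F_of_mem_G hg' hv') (hB ▸ hc) (by rw [hB, hB', h])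
  refine ⟨g'⁻¹ * (k * g), mul_mem (inv_mem hg') (mul_mem hk hg), ?_, ?_⟩
  · show g'.symm (k (g l)) = l'
    rw [hgl, hkE, LinearEquiv.symm_apply_eq, hg'l]
  · show g'.symm (k (g v)) = v'
    rw [hkv, LinearEquiv.symm_apply_eq]

lemma exists_B_eq_zero_of_typeAlpha {l v : V} (hl : l ∈ L) (hv : v ∈ F) (h : TypeAlpha l v) :
    ∃ w ∈ F, B l w = 0 ∧ ({v, iota v} : Set V) = {w, iota w} := by
  rcases (typeAlpha_iff hl hv).1 h with h0 | h0
  · exact ⟨v, hv, h0, rfl⟩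
  · exact ⟨iota v, iota_mem_F hv, h0, by rw [iota_iota, Set.pair_comm]⟩

/-- each pair (l,v) ∈ L × F is of type α or β (exactly one); type α holds
iff l + a = v or l + a = ι(v) for some a ∈ L; the type depends only on the classes in
L̄ × F̄, and G acts transitively on pairs of classes of type α and on those of type β. -/
theorem stmt12 :
    (∀ l ∈ L, ∀ v ∈ F, Xor' (TypeAlpha l v) (TypeBeta l v)) ∧
    (∀ l ∈ L, ∀ v ∈ F, (TypeAlpha l v ↔ ∃ a ∈ L, l + a = v ∨ l + a = iota v)) ∧
    (∀ l ∈ L, ∀ v ∈ F,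
      (TypeAlpha l v ↔ TypeAlpha (iota l) v) ∧ (TypeAlpha l v ↔ TypeAlpha l (iota v))) ∧
    (∀ l₁ ∈ L, ∀ v₁ ∈ F, ∀ l₂ ∈ L, ∀ v₂ ∈ F,
      TypeAlpha l₁ v₁ → TypeAlpha l₂ v₂ →
      ∃ g ∈ G, (fun x => g x) '' ({l₁, iota l₁} : Set V) = {l₂, iota l₂} ∧
        (fun x => g x) '' ({v₁, iota v₁} : Set V) = {v₂, iota v₂}) ∧
    (∀ l₁ ∈ L, ∀ v₁ ∈ F, ∀ l₂ ∈ L, ∀ v₂ ∈ F,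
      TypeBeta l₁ v₁ → TypeBeta l₂ v₂ →
      ∃ g ∈ G, (fun x => g x) '' ({l₁, iota l₁} : Set V) = {l₂, iota l₂} ∧
        (fun x => g x) '' ({v₁, iota v₁} : Set V) = {v₂, iota v₂}) := by
  refine ⟨fun l hl v hv => xor_typeAlpha_typeBeta hl hv,
    fun l hl v hv => typeAlpha_iff_exists_add_eq hl hv,
    fun l hl v hv => typeAlpha_iota_iff hl hv, ?_, ?_⟩
  · intro l₁ hl₁ v₁ hv₁ l₂ hl₂ v₂ hv₂ h₁ h₂
    obtain ⟨w₁, hw₁, hB₁, hpair₁⟩ := exists_B_eq_zero_of_typeAlpha hl₁ hv₁ h₁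
    obtain ⟨w₂, hw₂, hB₂, hpair₂⟩ := exists_B_eq_zero_of_typeAlpha hl₂ hv₂ h₂
    obtain ⟨g, hg, hgl, hgw⟩ :=
      exists_mem_G_eq_and_eq_of_B_eq hl₁ hw₁ hl₂ hw₂ (by omega) (hB₁.trans hB₂.symm)
    rw [hpair₁, hpair₂]
    exact ⟨g, hg, image_pairs_eq_of_mem_G hg hgl hgw⟩
  · intro l₁ hl₁ v₁ hv₁ l₂ hl₂ v₂ hv₂ h₁ h₂
    obtain ⟨g, hg, hgl, hgv⟩ :=
      exists_mem_G_eq_and_eq_of_B_eq hl₁ hv₁ hl₂ hv₂ h₁.1.le (h₁.1.trans h₂.1.symm)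
    exact ⟨g, hg, image_pairs_eq_of_mem_G hg hgl hgv⟩
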